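/- arXiv:1405.6691 — 3 statements merged into one kernel-verified Lean document; each statement's English description precedes it below -/
import Mathlib

section
/- Let 0 < α < 1 and equip ℝⁿ with the standard Euclidean inner product. If A ⊆ ℝⁿ \ {0} is a set such that the angle between any two distinct elements of A is at least α, then |A| ≤ C·α^{-(n-1)} for some constant C depending only on n. -/
/-!
Normalizing the vectors puts them on the unit sphere without changing angles, and on the unit
sphere an angle `θ` forces a chord of length at least `2θ/π`. With `s = α/π`, the balls of radius
`s` around the normalized points are therefore disjoint, and they all lie in the shell between the
spheres of radii `1 - s` and `1 + s`. Comparing Haar measures gives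
`|A| sᵈ ≤ (1 + s)ᵈ - (1 - s)ᵈ ≤ d 2ᵈ s` in dimension `d`, i.e. `|A| ≤ d (2π)ᵈ α^{-(d-1)} / π`.
-/

open Metric MeasureTheory InnerProductGeometry Module Real Set

theorem InnerProductGeometry.two_div_pi_mul_angle_le_norm_sub {V : Type*}
    [NormedAddCommGroup V] [InnerProductSpace ℝ V] {x y : V} (hx : ‖x‖ = 1) (hy : ‖y‖ = 1) :
    2 / π * angle x y ≤ ‖x - y‖ := by
  have hcos : cos (angle x y) ≤ 1 - 2 / π ^ 2 * angle x y ^ 2 :=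
    cos_le_one_sub_mul_cos_sq <| by rw [abs_of_nonneg (angle_nonneg x y)]; exact angle_le_pi x y
  have hsq : ‖x - y‖ ^ 2 = 2 - 2 * cos (angle x y) := by
    rw [norm_sub_sq_real, inner_eq_cos_angle_of_norm_eq_one hx hy, hx, hy]; ring
  refine (pow_le_pow_iff_left₀ (mul_nonneg (by positivity) (angle_nonneg x y)) (norm_nonneg _)
    two_ne_zero).1 ?_
  rw [hsq]
  have : (2 / π * angle x y) ^ 2 = 2 * (2 / π ^ 2 * angle x y ^ 2) := by ring
  linarith

theorem one_add_pow_sub_one_sub_pow_le {s : ℝ} (hs : 0 ≤ s) (hs1 : s ≤ 1) (n : ℕ) :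
    (1 + s) ^ n - (1 - s) ^ n ≤ n * 2 ^ n * s := by
  rcases n with _ | n
  · simp
  calc (1 + s) ^ (n + 1) - (1 - s) ^ (n + 1)
      ≤ |1 + s - (1 - s)| * (n + 1 : ℕ) * max |1 + s| |1 - s| ^ n := (le_abs_self _).trans
        (by simpa using abs_pow_sub_pow_le (1 + s) (1 - s) (n + 1))
    _ ≤ 2 * s * (n + 1 : ℕ) * 2 ^ n := by
        rw [abs_of_nonneg (by linarith : 0 ≤ 1 + s - (1 - s)),
          abs_of_nonneg (by linarith : 0 ≤ 1 + s), abs_of_nonneg (by linarith : 0 ≤ 1 - s),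
          max_eq_left (by linarith)]
        gcongr
        · linarith
        · linarith
    _ = _ := by push_cast; ring

theorem Finset.card_mul_pow_add_le_of_subset_sphere {E : Type*} [NormedAddCommGroup E]
    [NormedSpace ℝ E] [FiniteDimensional ℝ E] {t : Finset E} {s : ℝ} (hs : 0 < s) (hs1 : s < 1)
    (ht : (t : Set E) ⊆ sphere 0 1) (hsep : (t : Set E).Pairwise fun x y => 2 * s ≤ dist x y) :
    t.card * s ^ finrank ℝ E + (1 - s) ^ finrank ℝ E ≤ (1 + s) ^ finrank ℝ E := by
  borelize E
  set μ : Measure E := Measure.addHaar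
  have hball (x : E) {r : ℝ} (hr : 0 < r) :
      μ.real (ball x r) = r ^ finrank ℝ E * μ.real (ball 0 1) := by
    rw [measureReal_def, Measure.addHaar_ball_of_pos μ x hr, ENNReal.toReal_mul,
      ENNReal.toReal_ofReal (by positivity), measureReal_def]
  have hdisj : Disjoint (⋃ x ∈ t, ball x s) (ball 0 (1 - s)) := by
    refine disjoint_iUnion₂_left.2 fun x hx => ball_disjoint_ball ?_
    rw [mem_sphere.1 (ht hx)]; linarith
  have hsub : (⋃ x ∈ t, ball x s) ∪ ball 0 (1 - s) ⊆ ball 0 (1 + s) := by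
    refine Set.union_subset (iUnion₂_subset fun x hx => ball_subset_ball' ?_)
      (ball_subset_ball (show 1 - s ≤ 1 + s by linarith))
    rw [mem_sphere.1 (ht hx)]; linarith
  have hvol := measureReal_mono (μ := μ) hsub measure_ball_lt_top.ne
  have hfin : μ (⋃ x ∈ t, ball x s) ≠ ⊤ :=
    measure_ne_top_of_subset (Set.subset_union_left.trans hsub) measure_ball_lt_top.ne
  rw [measureReal_union hdisj measurableSet_ball hfin,
    measureReal_biUnion_finset
      (fun x hx y hy hxy => ball_disjoint_ball (by linarith [hsep hx hy hxy]))
      (fun _ _ => measurableSet_ball), Finset.sum_congr rfl fun x _ => hball x hs,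
    Finset.sum_const, nsmul_eq_mul, hball 0 (r := 1 - s) (by linarith),
    hball 0 (r := 1 + s) (by linarith), ← mul_assoc, ← add_mul] at hvol
  exact le_of_mul_le_mul_right hvol <|
    ENNReal.toReal_pos (measure_ball_pos μ 0 one_pos).ne' measure_ball_lt_top.ne

theorem Set.finite_and_ncard_mul_pow_add_le_of_subset_sphere {E : Type*} [NormedAddCommGroup E]
    [NormedSpace ℝ E] [FiniteDimensional ℝ E] {S : Set E} {s : ℝ} (hs : 0 < s) (hs1 : s < 1)
    (hS : S ⊆ sphere 0 1) (hsep : S.Pairwise fun x y => 2 * s ≤ dist x y) :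
    S.Finite ∧ S.ncard * s ^ finrank ℝ E + (1 - s) ^ finrank ℝ E ≤ (1 + s) ^ finrank ℝ E := by
  have hcard (t : Finset E) (hts : (t : Set E) ⊆ S) :=
    Finset.card_mul_pow_add_le_of_subset_sphere hs hs1 (hts.trans hS) (hsep.mono hts)
  have hfin : S.Finite := by
    by_contra hinf
    obtain ⟨N, hN⟩ := exists_nat_gt ((1 + s) ^ finrank ℝ E / s ^ finrank ℝ E)
    obtain ⟨t, hts, rfl⟩ := Set.Infinite.exists_subset_card_eq hinf N
    have := hcard t hts
    rw [div_lt_iff₀ (by positivity)] at hN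
    have : 0 ≤ (1 - s) ^ finrank ℝ E := pow_nonneg (by linarith) _
    linarith
  refine ⟨hfin, ?_⟩
  simpa [Set.ncard_eq_toFinset_card S hfin] using hcard hfin.toFinset (by simp)

theorem Set.finite_and_ncard_mul_pow_le_of_le_angle {F : Type*} [NormedAddCommGroup F]
    [InnerProductSpace ℝ F] [FiniteDimensional ℝ F] {A : Set F} {α : ℝ} (hα : 0 < α)
    (hαπ : α < π) (hA0 : 0 ∉ A) (hsep : ∀ u ∈ A, ∀ v ∈ A, u ≠ v → α ≤ angle u v) :
    A.Finite ∧ A.ncard * (α / π) ^ finrank ℝ F ≤ finrank ℝ F * 2 ^ finrank ℝ F * (α / π) := by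
  have hne (u : F) (hu : u ∈ A) : u ≠ 0 := fun h => hA0 (h ▸ hu)
  have hinj : InjOn NormedSpace.normalize A := by
    intro u hu v hv huv
    by_contra hne'
    have := hsep u hu v hv hne'
    rw [← angle_normalize_left, ← angle_normalize_right, huv,
      angle_self ((NormedSpace.normalize_eq_zero_iff v).not.2 (hne v hv))] at this
    linarith
  have hsphere : NormedSpace.normalize '' A ⊆ sphere 0 1 := by
    rintro _ ⟨u, hu, rfl⟩
    exact mem_sphere_zero_iff_norm.2 (NormedSpace.norm_normalize (hne u hu))
  have hdist : (NormedSpace.normalize '' A).Pairwise fun x y => 2 * (α / π) ≤ dist x y := by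
    rintro _ ⟨u, hu, rfl⟩ _ ⟨v, hv, rfl⟩ huv
    calc 2 * (α / π) = 2 / π * α := by ring
      _ ≤ 2 / π * angle (NormedSpace.normalize u) (NormedSpace.normalize v) := by
        rw [angle_normalize_left, angle_normalize_right]
        gcongr
        exact hsep u hu v hv fun h => huv (h ▸ rfl)
      _ ≤ dist (NormedSpace.normalize u) (NormedSpace.normalize v) := by
        rw [dist_eq_norm]
        exact two_div_pi_mul_angle_le_norm_sub (NormedSpace.norm_normalize (hne u hu))
          (NormedSpace.norm_normalize (hne v hv))
  have hs : 0 < α / π := by positivity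
  have hs1 : α / π < 1 := (div_lt_one pi_pos).2 hαπ
  obtain ⟨hfin, hcard⟩ :=
    Set.finite_and_ncard_mul_pow_add_le_of_subset_sphere hs hs1 hsphere hdist
  rw [hinj.ncard_image] at hcard
  exact ⟨hfin.of_finite_image hinj,
    by linarith [one_add_pow_sub_one_sub_pow_le hs.le hs1.le (finrank ℝ F)]⟩

theorem stmt_2 (n : ℕ) :
    ∃ C : ℝ, 0 < C ∧ ∀ (α : ℝ), 0 < α → α < 1 →
      ∀ A : Set (EuclideanSpace ℝ (Fin n)),
        (0 : EuclideanSpace ℝ (Fin n)) ∉ A →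
        (∀ u ∈ A, ∀ v ∈ A, u ≠ v → α ≤ InnerProductGeometry.angle u v) →
        A.Finite ∧ (A.ncard : ℝ) ≤ C * α ^ (-((n : ℝ) - 1)) := by
  refine ⟨(n + 1) * (2 * π) ^ n, by positivity, fun α hα hα1 A hA0 hsep => ?_⟩
  obtain ⟨hfin, hcard⟩ := Set.finite_and_ncard_mul_pow_le_of_le_angle hα
    (hα1.trans (by linarith [pi_gt_three])) hA0 hsep
  rw [finrank_euclideanSpace_fin, div_pow] at hcard
  refine ⟨hfin, ?_⟩
  rw [neg_sub, rpow_sub hα, rpow_one, rpow_natCast, mul_div_assoc', le_div_iff₀ (by positivity)]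
  calc A.ncard * α ^ n = π ^ n * (A.ncard * (α ^ n / π ^ n)) := by field_simp
    _ ≤ π ^ n * (n * 2 ^ n * (α / π)) := by gcongr
    _ ≤ π ^ n * (n * 2 ^ n * α) := by gcongr; exact div_le_self hα.le (by linarith [pi_gt_three])
    _ ≤ (n + 1) * (2 * π) ^ n * α := by
      have : 0 ≤ (2 * π) ^ n * α := by positivity
      rw [mul_pow] at this ⊢
      nlinarith
end

section
/- Let K ⊆ ℝ be a number field with Galois closure K̄ ⊆ ℂ, and let A ≥ 2, α ≥ 1. Call an element of K 'α-well-balanced' if it equals a/b with a, b ∈ O_K such that either a = 0 and b = 1, or A^{-α} ≤ |σ(a)|, |σ(b)| ≤ A^α for every embedding σ : K̄ → ℂ extending over Gal(K̄/ℚ). If x and y are both α-well-balanced, then x + y is β-well-balanced with β = (2α+1)·[K̄:ℚ]. -/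
/-- An element `x` of `ℂ` (thought of as lying in the number field `K ⊆ K̄`) is
`α`-well-balanced (with respect to the Galois closure `K̄` and the parameter `A`)
if `x = a/b` with `a, b` algebraic integers of `K̄` such that either `a = 0` and
`b = 1`, or `A^{-α} ≤ |σ(a)|, |σ(b)| ≤ A^α` for every `σ ∈ Gal(K̄/ℚ)`. -/
def WellBalanced (Kbar : IntermediateField ℚ ℂ) (A α : ℝ) (x : ℂ) : Prop :=
  ∃ a b : Kbar, IsIntegral ℤ (a : ℂ) ∧ IsIntegral ℤ (b : ℂ) ∧ x = (a : ℂ) / (b : ℂ) ∧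
    ((a = 0 ∧ b = 1) ∨ ∀ σ : Kbar ≃ₐ[ℚ] Kbar,
      (A ^ (-α) ≤ ‖((σ a : Kbar) : ℂ)‖ ∧ ‖((σ a : Kbar) : ℂ)‖ ≤ A ^ α) ∧
      (A ^ (-α) ≤ ‖((σ b : Kbar) : ℂ)‖ ∧ ‖((σ b : Kbar) : ℂ)‖ ≤ A ^ α))

/-!
Write `x + y = (a d + b c) / (b d)`. The conjugates of `b d` are products of two numbers in
`[A^{-α}, A^α]`, and those of `N = a d + b c` are at most `2 A^{2α} ≤ A^{2α+1}` in absolute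
value. If `N ≠ 0`, the product of its conjugates is the norm of a nonzero algebraic integer,
a nonzero rational integer, so it is at least `1`; as the other `[K̄:ℚ] - 1` factors are at
most `A^{2α+1}`, every conjugate of `N` is at least `A^{-(2α+1)[K̄:ℚ]}`.
-/

open Finset

theorem rpow_neg_card_le_of_one_le_prod {ι : Type*} [Fintype ι] {f : ι → ℝ} {M : ℝ}
    (hM : 1 ≤ M) (hf0 : ∀ i, 0 ≤ f i) (hfM : ∀ i, f i ≤ M) (hprod : 1 ≤ ∏ i, f i) (i : ι) :
    M ^ (-(Fintype.card ι : ℝ)) ≤ f i := by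
  classical
  have hrest : ∏ j ∈ univ.erase i, f j ≤ M ^ Fintype.card ι :=
    calc ∏ j ∈ univ.erase i, f j ≤ ∏ _j ∈ univ.erase i, M :=
          prod_le_prod (fun j _ => hf0 j) fun j _ => hfM j
      _ = M ^ (univ.erase i).card := prod_const M
      _ ≤ M ^ Fintype.card ι := pow_le_pow_right₀ hM (card_erase_le.trans (card_univ).le)
  have hone : 1 ≤ f i * M ^ Fintype.card ι :=
    calc 1 ≤ ∏ j, f j := hprod
      _ = f i * ∏ j ∈ univ.erase i, f j := (mul_prod_erase _ _ (mem_univ i)).symm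
      _ ≤ f i * M ^ Fintype.card ι := mul_le_mul_of_nonneg_left hrest (hf0 i)
  rw [Real.rpow_neg (by linarith), Real.rpow_natCast]
  exact (inv_le_iff_one_le_mul₀ (by positivity)).mpr hone

theorem norm_add_le_rpow_add_one {E : Type*} [SeminormedAddCommGroup E] {A α : ℝ} (hA : 2 ≤ A)
    {u v : E} (hu : ‖u‖ ≤ A ^ α) (hv : ‖v‖ ≤ A ^ α) : ‖u + v‖ ≤ A ^ (α + 1) := by
  rw [Real.rpow_add_one (by linarith)]
  have : 0 ≤ A ^ α := Real.rpow_nonneg (by linarith) α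
  calc ‖u + v‖ ≤ ‖u‖ + ‖v‖ := norm_add_le u v
    _ ≤ A ^ α * 2 := by linarith
    _ ≤ A ^ α * A := by gcongr

theorem one_le_prod_norm_map_aut {L : Type*} [Field L] [Algebra ℚ L] [FiniteDimensional ℚ L]
    [IsGalois ℚ L] (φ : L →+* ℂ) {t : L} (ht : IsIntegral ℤ t) (ht0 : t ≠ 0) :
    1 ≤ ∏ σ : L ≃ₐ[ℚ] L, ‖φ (σ t)‖ := by
  obtain ⟨m, hm⟩ := IsIntegrallyClosed.isIntegral_iff.mp (Algebra.isIntegral_norm ℚ ht)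
  have hm0 : m ≠ 0 := by
    rintro rfl
    exact ht0 (by simpa using hm.symm)
  calc (1 : ℝ) ≤ |(m : ℝ)| := by exact_mod_cast Int.one_le_abs hm0
    _ = ‖φ (algebraMap ℚ L (Algebra.norm ℚ t))‖ := by
        rw [← hm, eq_ratCast, map_ratCast]; simp
    _ = ∏ σ : L ≃ₐ[ℚ] L, ‖φ (σ t)‖ := by
        rw [Algebra.norm_eq_prod_automorphisms, map_prod, norm_prod]

section

variable {Kbar : IntermediateField ℚ ℂ} {A α β : ℝ}

variable (Kbar A α) in
def ConjBalanced (t : Kbar) : Prop :=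
  ∀ σ : Kbar ≃ₐ[ℚ] Kbar, A ^ (-α) ≤ ‖((σ t : Kbar) : ℂ)‖ ∧ ‖((σ t : Kbar) : ℂ)‖ ≤ A ^ α

theorem wellBalanced_iff {x : ℂ} :
    WellBalanced Kbar A α x ↔ ∃ a b : Kbar, IsIntegral ℤ (a : ℂ) ∧ IsIntegral ℤ (b : ℂ) ∧
      x = (a : ℂ) / (b : ℂ) ∧
      ((a = 0 ∧ b = 1) ∨ ConjBalanced Kbar A α a ∧ ConjBalanced Kbar A α b) := by
  simp only [WellBalanced, ConjBalanced, forall_and]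

namespace ConjBalanced

theorem mono {t : Kbar} (hA : 1 ≤ A) (hαβ : α ≤ β) (h : ConjBalanced Kbar A α t) :
    ConjBalanced Kbar A β t := fun σ =>
  ⟨(Real.rpow_le_rpow_of_exponent_le hA (neg_le_neg hαβ)).trans (h σ).1,
    (h σ).2.trans (Real.rpow_le_rpow_of_exponent_le hA hαβ)⟩

theorem ne_zero {t : Kbar} (hA : 0 < A) (h : ConjBalanced Kbar A α t) : (t : ℂ) ≠ 0 := by
  intro ht
  have := (h 1).1
  rw [AlgEquiv.one_apply, ht, norm_zero] at this
  exact (Real.rpow_pos_of_pos hA _).not_ge this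

theorem mul {s t : Kbar} (hA : 0 < A) (hs : ConjBalanced Kbar A α s)
    (ht : ConjBalanced Kbar A β t) : ConjBalanced Kbar A (α + β) (s * t) := by
  intro σ
  obtain ⟨hs₁, hs₂⟩ := hs σ
  obtain ⟨ht₁, ht₂⟩ := ht σ
  rw [map_mul, MulMemClass.coe_mul, norm_mul, neg_add, Real.rpow_add hA, Real.rpow_add hA]
  exact ⟨mul_le_mul hs₁ ht₁ (by positivity) (by positivity),
    mul_le_mul hs₂ ht₂ (by positivity) (by positivity)⟩

theorem of_norm_le [Normal ℚ Kbar] [FiniteDimensional ℚ Kbar] {t : Kbar} {γ : ℝ}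
    (hA : 1 ≤ A) (hγ : 0 ≤ γ) (ht : IsIntegral ℤ (t : ℂ)) (ht0 : t ≠ 0)
    (hle : ∀ σ : Kbar ≃ₐ[ℚ] Kbar, ‖((σ t : Kbar) : ℂ)‖ ≤ A ^ γ) :
    ConjBalanced Kbar A (γ * Module.finrank ℚ Kbar) t := by
  have : IsGalois ℚ Kbar := ⟨⟩
  have hcard : (Fintype.card (Kbar ≃ₐ[ℚ] Kbar) : ℝ) = Module.finrank ℚ Kbar := by
    rw [← Nat.card_eq_fintype_card, IsGalois.card_aut_eq_finrank]
  have hn : (1 : ℝ) ≤ Module.finrank ℚ Kbar := by exact_mod_cast Module.finrank_pos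
  have hprod := one_le_prod_norm_map_aut Kbar.val.toRingHom
    ((isIntegral_algHom_iff (Kbar.val.restrictScalars ℤ) Subtype.val_injective).mp ht) ht0
  intro σ
  constructor
  · have := rpow_neg_card_le_of_one_le_prod (Real.one_le_rpow hA hγ) (fun _ => norm_nonneg _)
      hle hprod σ
    rwa [hcard, ← Real.rpow_mul (by linarith), mul_neg] at this
  · exact (hle σ).trans (Real.rpow_le_rpow_of_exponent_le hA (le_mul_of_one_le_right hγ hn))

end ConjBalanced

theorem WellBalanced.mono {x : ℂ} (hA : 1 ≤ A) (hαβ : α ≤ β) (h : WellBalanced Kbar A α x) :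
    WellBalanced Kbar A β x := by
  obtain ⟨a, b, ha, hb, hx, hab⟩ := wellBalanced_iff.mp h
  exact wellBalanced_iff.mpr
    ⟨a, b, ha, hb, hx, hab.imp_right fun h => ⟨h.1.mono hA hαβ, h.2.mono hA hαβ⟩⟩

end

theorem stmt_3_general (Kbar : IntermediateField ℚ ℂ)
    [Normal ℚ Kbar] [FiniteDimensional ℚ Kbar]
    (A α : ℝ) (hA : 2 ≤ A) (hα : 1 ≤ α)
    (x y : ℂ)
    (hwx : WellBalanced Kbar A α x) (hwy : WellBalanced Kbar A α y) :
    WellBalanced Kbar A ((2 * α + 1) * (Module.finrank ℚ Kbar : ℝ)) (x + y) := by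
  have hA₀ : 0 < A := by linarith
  have hA₁ : 1 ≤ A := by linarith
  have hn : (1 : ℝ) ≤ Module.finrank ℚ Kbar := by exact_mod_cast Module.finrank_pos
  have hαβ : α ≤ (2 * α + 1) * Module.finrank ℚ Kbar := by nlinarith
  obtain ⟨a, b, ha, hb, rfl, ⟨rfl, rfl⟩ | ⟨hab, hbb⟩⟩ := wellBalanced_iff.mp hwx
  · simpa using hwy.mono hA₁ hαβ
  obtain ⟨c, d, hc, hd, rfl, ⟨rfl, rfl⟩ | ⟨hcb, hdb⟩⟩ := wellBalanced_iff.mp hwy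
  · simpa using hwx.mono hA₁ hαβ
  have hsum : (a : ℂ) / b + c / d = ((a * d + b * c : Kbar) : ℂ) / (b * d : Kbar) := by
    push_cast
    exact div_add_div _ _ (hbb.ne_zero hA₀) (hdb.ne_zero hA₀)
  rw [wellBalanced_iff, hsum]
  by_cases hN : a * d + b * c = 0
  · exact ⟨0, 1, isIntegral_zero, isIntegral_one, by simp [hN], .inl ⟨rfl, rfl⟩⟩
  have hNle : ∀ σ : Kbar ≃ₐ[ℚ] Kbar, ‖((σ (a * d + b * c) : Kbar) : ℂ)‖ ≤ A ^ (α + α + 1) :=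
    fun σ => by
      rw [map_add, AddMemClass.coe_add]
      exact norm_add_le_rpow_add_one hA ((hab.mul hA₀ hdb) σ).2 ((hbb.mul hA₀ hcb) σ).2
  have hNint : IsIntegral ℤ ((a * d + b * c : Kbar) : ℂ) := by
    push_cast
    exact (ha.mul hd).add (hb.mul hc)
  have hDint : IsIntegral ℤ ((b * d : Kbar) : ℂ) := by
    push_cast
    exact hb.mul hd
  refine ⟨_, _, hNint, hDint, rfl, .inr ⟨?_, (hbb.mul hA₀ hdb).mono hA₁ (by nlinarith)⟩⟩
  rw [two_mul]
  exact ConjBalanced.of_norm_le hA₁ (by linarith) hNint hN hNle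

theorem stmt_3 (Kbar K : IntermediateField ℚ ℂ)
    [Normal ℚ Kbar] [FiniteDimensional ℚ Kbar]
    (hK : K ≤ Kbar) (hreal : ∀ z ∈ K, (z : ℂ).im = 0)
    (A α : ℝ) (hA : 2 ≤ A) (hα : 1 ≤ α)
    (x y : ℂ) (hx : x ∈ K) (hy : y ∈ K)
    (hwx : WellBalanced Kbar A α x) (hwy : WellBalanced Kbar A α y) :
    WellBalanced Kbar A ((2 * α + 1) * (Module.finrank ℚ Kbar : ℝ)) (x + y) :=
  stmt_3_general Kbar A α hA hα x y hwx hwy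
end

section
/- Let x, y ∈ ℝⁿ be vectors lying on the boundary of the unit cube [−1,1]ⁿ (i.e., with sup-norm equal to 1). If x and y lie in the same face of the cube and ‖x − y‖_∞ < δ, then the Euclidean angle between x and y is less than C·δ for a constant C depending only on n. -/
/-!
On the unit sphere, the law of cosines `‖u - v‖² = 2 - 2 cos θ` together with Jordan's inequality
`cos θ ≤ 1 - 2θ²/π²` gives `θ ≤ (π/2)‖u - v‖`. Normalizing moves `x` and `y` by at most
`2‖x - y‖/‖x‖`, so `‖x‖ · angle x y ≤ π ‖x - y‖`. A coordinate equal to `±1` forces Euclidean norm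
at least `1`, and the Euclidean distance is at most `√n` times the sup distance.
-/

open Real InnerProductGeometry NormedSpace

section InnerProductSpace

variable {V : Type*} [NormedAddCommGroup V] [InnerProductSpace ℝ V]

theorem angle_le_pi_div_two_mul_norm_sub {x y : V} (hx : ‖x‖ = 1) (hy : ‖y‖ = 1) :
    angle x y ≤ π / 2 * ‖x - y‖ := by
  set θ := angle x y
  have hcos : cos θ ≤ 1 - 2 / π ^ 2 * θ ^ 2 :=
    cos_le_one_sub_mul_cos_sq (abs_le.2 ⟨by linarith [angle_nonneg x y, pi_pos], angle_le_pi x y⟩)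
  have hchord : ‖x - y‖ ^ 2 = 2 - 2 * cos θ := by
    rw [sq, norm_sub_sq_eq_norm_sq_add_norm_sq_sub_two_mul_norm_mul_norm_mul_cos_angle, hx, hy]
    ring
  refine (pow_le_pow_iff_left₀ (angle_nonneg x y) (by positivity) two_ne_zero).1 ?_
  rw [mul_pow, hchord]
  have hπ : 0 < π ^ 2 := by positivity
  calc θ ^ 2 = π ^ 2 / 4 * (2 - 2 * (1 - 2 / π ^ 2 * θ ^ 2)) := by field_simp; ring
    _ ≤ (π / 2) ^ 2 * (2 - 2 * cos θ) := by rw [div_pow]; norm_num; gcongr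

theorem norm_mul_norm_normalize_sub_le (x y : V) :
    ‖x‖ * ‖normalize x - normalize y‖ ≤ 2 * ‖x - y‖ := by
  have hsplit : ‖x‖ • (normalize x - normalize y) = (x - y) + (‖y‖ - ‖x‖) • normalize y := by
    rw [smul_sub, norm_smul_normalize, sub_smul, norm_smul_normalize]; abel
  have hny : ‖normalize y‖ ≤ 1 := by
    rcases eq_or_ne y 0 with rfl | hy
    · simp
    · exact (norm_normalize_eq_one_iff.2 hy).le
  calc ‖x‖ * ‖normalize x - normalize y‖ = ‖(x - y) + (‖y‖ - ‖x‖) • normalize y‖ := by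
        rw [← hsplit, norm_smul, norm_norm]
    _ ≤ ‖x - y‖ + |‖y‖ - ‖x‖| * ‖normalize y‖ := by
        grw [norm_add_le, norm_smul, Real.norm_eq_abs]
    _ ≤ ‖x - y‖ + ‖x - y‖ * 1 := by
        gcongr
        rw [abs_sub_comm]
        exact abs_norm_sub_norm_le x y
    _ = 2 * ‖x - y‖ := by ring

theorem norm_mul_angle_le_pi_mul_norm_sub (x y : V) : ‖x‖ * angle x y ≤ π * ‖x - y‖ := by
  rcases eq_or_ne x 0 with rfl | hx
  · simp only [norm_zero, zero_mul, zero_sub, norm_neg]; positivity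
  rcases eq_or_ne y 0 with rfl | hy
  · rw [angle_zero_right, sub_zero]
    nlinarith [pi_pos, norm_nonneg x]
  have hangle : angle x y = angle (normalize x) (normalize y) := by
    rw [NormedSpace.normalize, NormedSpace.normalize, angle_smul_left_of_pos _ _ (by positivity),
      angle_smul_right_of_pos _ _ (by positivity)]
  calc ‖x‖ * angle x y ≤ ‖x‖ * (π / 2 * ‖normalize x - normalize y‖) := by
        rw [hangle]
        gcongr
        exact angle_le_pi_div_two_mul_norm_sub (norm_normalize_eq_one_iff.2 hx)
          (norm_normalize_eq_one_iff.2 hy)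
    _ = π / 2 * (‖x‖ * ‖normalize x - normalize y‖) := by ring
    _ ≤ π / 2 * (2 * ‖x - y‖) := by grw [norm_mul_norm_normalize_sub_le]
    _ = π * ‖x - y‖ := by ring

theorem angle_le_pi_mul_norm_sub {x y : V} (hx : 1 ≤ ‖x‖) : angle x y ≤ π * ‖x - y‖ :=
  (le_mul_of_one_le_left (angle_nonneg x y) hx).trans (norm_mul_angle_le_pi_mul_norm_sub x y)

end InnerProductSpace

namespace EuclideanSpace

variable {ι : Type*} [Fintype ι]

theorem norm_toLp_le_sqrt_card_mul_norm {𝕜 : Type*} [RCLike 𝕜] (z : ι → 𝕜) :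
    ‖WithLp.toLp 2 z‖ ≤ √(Fintype.card ι) * ‖z‖ := by
  rw [EuclideanSpace.norm_eq, ← sqrt_sq (norm_nonneg z), ← sqrt_mul (Nat.cast_nonneg _)]
  gcongr
  calc ∑ i, ‖z i‖ ^ 2 ≤ ∑ _i : ι, ‖z‖ ^ 2 := by gcongr with i; exact norm_le_pi_norm z i
    _ = _ := by simp

theorem angle_toLp (x y : ι → ℝ) :
    angle (WithLp.toLp 2 x) (WithLp.toLp 2 y) =
      arccos ((∑ i, x i * y i) / (√(∑ i, x i ^ 2) * √(∑ i, y i ^ 2))) := by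
  simp [angle, EuclideanSpace.norm_eq, PiLp.inner_apply, mul_comm]

end EuclideanSpace

theorem stmt_19 (n : ℕ) :
    ∃ C : ℝ, 0 < C ∧ ∀ (x y : Fin n → ℝ) (δ : ℝ), 0 < δ →
      (∀ i, |x i| ≤ 1) → (∃ i, |x i| = 1) →
      (∀ i, |y i| ≤ 1) → (∃ i, |y i| = 1) →
      (∃ i₀, (x i₀ = 1 ∧ y i₀ = 1) ∨ (x i₀ = -1 ∧ y i₀ = -1)) →
      (∀ i, |x i - y i| < δ) →
      Real.arccos ((∑ i, x i * y i) /
          (Real.sqrt (∑ i, x i ^ 2) * Real.sqrt (∑ i, y i ^ 2))) < C * δ := by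
  refine ⟨π * (√n + 1), by positivity, ?_⟩
  rintro x y δ hδ - - - - ⟨i₀, hface⟩ hclose
  have hx : 1 ≤ ‖WithLp.toLp 2 x‖ := by
    have : |x i₀| = 1 := by rcases hface with ⟨h, -⟩ | ⟨h, -⟩ <;> simp [h]
    simpa [this] using PiLp.norm_apply_le (WithLp.toLp 2 x) i₀
  have hsup : ‖x - y‖ < δ := (pi_norm_lt_iff hδ).2 hclose
  rw [← EuclideanSpace.angle_toLp]
  calc angle (WithLp.toLp 2 x) (WithLp.toLp 2 y)
      ≤ π * ‖WithLp.toLp 2 (x - y)‖ := angle_le_pi_mul_norm_sub hx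
    _ ≤ π * (√n * ‖x - y‖) := by
        grw [EuclideanSpace.norm_toLp_le_sqrt_card_mul_norm, Fintype.card_fin]
    _ ≤ π * (√n + 1) * ‖x - y‖ := by nlinarith [pi_pos, norm_nonneg (x - y)]
    _ < π * (√n + 1) * δ := by gcongr
end
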